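/- arXiv:1911.10137 — 7 statements merged into one kernel-verified Lean document; each statement's English description precedes it below -/
import Mathlib

section
/- For all real ε > 0, δ ∈ (0,1), and real numbers a, b with a ≥ b + (1/ε)·ln(1/δ), we have exp(ε·a) / (exp(ε·(a+1)) + exp(ε·(b+1))) ≥ (1−δ)·e^{−ε}·( exp(ε·a) / (exp(ε·a)+exp(ε·b)) ) and moreover exp(ε·a)/(exp(ε·a)+exp(ε·b)) ≥ 1−δ. -/
open Real

/-- Probability of following the child of weight `a` rather than the one of weight `b` under the
exponential-weights rule with parameter `ε`. -/
noncomputable def expWeightProb (ε a b : ℝ) : ℝ :=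
  exp (ε * a) / (exp (ε * a) + exp (ε * b))

lemma expWeightProb_nonneg (ε a b : ℝ) : 0 ≤ expWeightProb ε a b := by
  unfold expWeightProb
  positivity

lemma exp_add_exp_mul_add (ε a b c : ℝ) :
    exp (ε * (a + c)) + exp (ε * (b + c)) = exp (ε * c) * (exp (ε * a) + exp (ε * b)) := by
  simp only [mul_add, exp_add]
  ring

lemma div_exp_add_exp_mul_add (ε a b c : ℝ) :
    exp (ε * a) / (exp (ε * (a + c)) + exp (ε * (b + c))) =
      exp (-(ε * c)) * expWeightProb ε a b := by
  rw [exp_add_exp_mul_add, expWeightProb, exp_neg, mul_comm (exp (ε * c)), ← div_div,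
    div_eq_mul_inv _ (exp (ε * c))]
  ring

lemma exp_mul_le_mul_exp_mul_of_gap {ε δ a b : ℝ} (hε : 0 < ε) (hδ : 0 < δ)
    (hab : b + 1 / ε * log (1 / δ) ≤ a) : exp (ε * b) ≤ δ * exp (ε * a) := by
  have hgap : ε * b + log (1 / δ) ≤ ε * a := by
    calc ε * b + log (1 / δ) = ε * (b + 1 / ε * log (1 / δ)) := by field_simp
      _ ≤ ε * a := mul_le_mul_of_nonneg_left hab hε.le
  have hexp := exp_le_exp.mpr hgap
  rw [exp_add, exp_log (by positivity)] at hexp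
  calc exp (ε * b) = δ * (exp (ε * b) * (1 / δ)) := by field_simp
    _ ≤ δ * exp (ε * a) := by gcongr

lemma one_sub_le_div_add_of_le_mul {x y δ : ℝ} (hx : 0 < x) (hy : 0 ≤ y) (hδ : 0 ≤ δ)
    (h : y ≤ δ * x) : 1 - δ ≤ x / (x + y) := by
  rw [le_div_iff₀ (by positivity)]
  nlinarith

lemma one_sub_le_expWeightProb {ε δ a b : ℝ} (hε : 0 < ε) (hδ : 0 < δ)
    (hab : b + 1 / ε * log (1 / δ) ≤ a) : 1 - δ ≤ expWeightProb ε a b :=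
  one_sub_le_div_add_of_le_mul (exp_pos _) (exp_pos _).le hδ.le
    (exp_mul_le_mul_exp_mul_of_gap hε hδ hab)

theorem stmt3_general (ε δ a b : ℝ) (hε : 0 < ε) (hδ0 : 0 < δ)
    (hab : a ≥ b + (1 / ε) * Real.log (1 / δ)) :
    Real.exp (ε * a) / (Real.exp (ε * (a + 1)) + Real.exp (ε * (b + 1))) ≥
      (1 - δ) * Real.exp (-ε) *
        (Real.exp (ε * a) / (Real.exp (ε * a) + Real.exp (ε * b))) ∧
    Real.exp (ε * a) / (Real.exp (ε * a) + Real.exp (ε * b)) ≥ 1 - δ := by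
  have hp : 1 - δ ≤ expWeightProb ε a b := one_sub_le_expWeightProb hε hδ0 hab
  refine ⟨?_, hp⟩
  rw [div_exp_add_exp_mul_add, mul_one, ge_iff_le, mul_assoc]
  exact mul_le_of_le_one_left (mul_nonneg (exp_pos _).le (expWeightProb_nonneg ε a b))
    (by linarith)

theorem stmt3 (ε δ a b : ℝ) (hε : 0 < ε) (hδ0 : 0 < δ) (hδ1 : δ < 1)
    (hab : a ≥ b + (1 / ε) * Real.log (1 / δ)) :
    Real.exp (ε * a) / (Real.exp (ε * (a + 1)) + Real.exp (ε * (b + 1))) ≥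
      (1 - δ) * Real.exp (-ε) *
        (Real.exp (ε * a) / (Real.exp (ε * a) + Real.exp (ε * b))) ∧
    Real.exp (ε * a) / (Real.exp (ε * a) + Real.exp (ε * b)) ≥ 1 - δ :=
  stmt3_general ε δ a b hε hδ0 hab
end

section
/- Let S and S' be multisets over a totally ordered set X with S' = S ∪ {x'} for some x' ∈ X, |S| = n. For t < n/2, let trim_t(S) denote the multiset obtained by removing the t largest and t smallest elements of S (with multiplicity). Then trim_t(S') can be obtained from trim_t(S) by adding one element, and the two agree on all but one entry when aligned as sorted sequences of lengths n−2t and n+1−2t. -/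
open List

/-- `trim t S` removes the `t` smallest and `t` largest elements of `S`
(counted with multiplicity). -/
def trim {X : Type*} [LinearOrder X] (t : ℕ) (S : Multiset X) : Multiset X :=
  (((S.sort (· ≤ ·)).drop t).take (Multiset.card S - 2 * t) : List X)

private theorem sublist_drop_aux {α : Type*} {l l' : List α} (h : l <+ l') (n : ℕ) :
    l.drop n <+ l'.drop n := by
  induction h generalizing n with
  | slnil => simp
  | @cons l₁ l₂ a h ih =>
    cases n with
    | zero => exact h.cons a
    | succ m =>
      rw [List.drop_succ_cons]
      have h1 : l₁.drop (m+1) <+ l₁.drop m := by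
        rw [← List.drop_drop]
        exact List.drop_sublist 1 _
      exact h1.trans (ih m)
  | cons_cons a h ih =>
    cases n with
    | zero => exact h.cons₂ a
    | succ m => simpa using ih m

private theorem sublist_take_aux {α : Type*} {l l' : List α} (h : l <+ l') (n : ℕ) :
    l.take n <+ l'.take (n + (l'.length - l.length)) := by
  induction h generalizing n with
  | slnil => simp
  | @cons l₁ l₂ a h ih =>
    have hle : l₁.length ≤ l₂.length := h.length_le
    have : n + ((a :: l₂).length - l₁.length) = (n + (l₂.length - l₁.length)) + 1 := by
      simp; omega
    rw [this, List.take_succ_cons]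
    exact (ih n).cons a
  | @cons_cons l₁ l₂ a h ih =>
    cases n with
    | zero => simp
    | succ m =>
      have : m + 1 + ((a :: l₂).length - (a :: l₁).length) =
          (m + (l₂.length - l₁.length)) + 1 := by simp; omega
      rw [this, List.take_succ_cons, List.take_succ_cons]
      exact (ih m).cons₂ a

theorem stmt7 {X : Type*} [LinearOrder X] (t n : ℕ) (S : Multiset X) (x' : X)
    (hcard : Multiset.card S = n) (ht : 2 * t < n) :
    (trim t S).card = n - 2 * t ∧
    (trim t (x' ::ₘ S)).card = n + 1 - 2 * t ∧
    ∃ b : X, trim t (x' ::ₘ S) = b ::ₘ trim t S := by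
  set L := S.sort (· ≤ ·) with hL
  set L' := (x' ::ₘ S).sort (· ≤ ·) with hL'
  have hLlen : L.length = n := by rw [hL, Multiset.length_sort, hcard]
  have hL'len : L'.length = n + 1 := by rw [hL', Multiset.length_sort]; simp [hcard]
  -- L' = orderedInsert x' L
  have hperm : L' ~ x' :: L := by
    apply Multiset.coe_eq_coe.mp
    rw [hL', hL, Multiset.sort_eq, ← Multiset.cons_coe, Multiset.sort_eq]
  have hL'eq : L' = L.orderedInsert (· ≤ ·) x' := by
    have : IsAntisymm X (fun x1 x2 => x1 ≤ x2) := ⟨fun _ _ h h' => le_antisymm h h'⟩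
    exact List.Perm.eq_of_pairwise' (Multiset.pairwise_sort _ _)
      ((Multiset.pairwise_sort S _).orderedInsert x' L) (hperm.trans (List.perm_orderedInsert _ _ _).symm)
  have hsub : L <+ L' := hL'eq ▸ List.sublist_orderedInsert x' L
  have hcard1 : (trim t S).card = n - 2 * t := by
    simp only [trim, Multiset.coe_card, List.length_take, List.length_drop, ← hL, hLlen, hcard]
    omega
  have hcard2 : (trim t (x' ::ₘ S)).card = n + 1 - 2 * t := by
    simp only [trim, Multiset.coe_card, List.length_take, List.length_drop, ← hL']
    simp [hcard]
    omega
  refine ⟨hcard1, hcard2, ?_⟩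
  -- sublist of the trimmed lists
  have hdrop : L.drop t <+ L'.drop t := sublist_drop_aux hsub t
  have hlen' : (L'.drop t).length - (L.drop t).length = 1 := by
    simp [hLlen, hL'len]; omega
  have htake : (L.drop t).take (n - 2 * t) <+ (L'.drop t).take (n + 1 - 2 * t) := by
    have := sublist_take_aux hdrop (n - 2 * t)
    rw [hlen'] at this
    have : (L.drop t).take (n - 2 * t) <+ (L'.drop t).take (n - 2 * t + 1) := this
    convert this using 2
    omega
  have hle : trim t S ≤ trim t (x' ::ₘ S) := by
    simp only [trim, ← hL, ← hL', hcard]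
    have : Multiset.card (x' ::ₘ S) = n + 1 := by simp [hcard]
    rw [this]
    exact (htake.subperm)
  have hlt : trim t S < trim t (x' ::ₘ S) :=
    lt_of_le_of_ne hle (by intro h; rw [h] at hcard1; omega)
  obtain ⟨b, hb⟩ := Multiset.lt_iff_cons_le.mp hlt
  refine ⟨b, (Multiset.eq_of_le_of_card_le hb ?_).symm⟩
  rw [hcard2, Multiset.card_cons, hcard1]
  omega
end

section
/- Let X be a finite nonempty set, q : X → ℤ a quality function, ε > 0, and let M be the distribution on X assigning to each y probability proportional to exp(ε·q(y)/2). Then for every β ∈ (0,1), the probability under M that q(y) < max_{x∈X} q(x) − (2/ε)·ln(|X|/β) is at most β. -/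
/-!
A point with quality below `OPT - t` has weight at most `exp (-ε t / 2)` times the weight of a
maximiser, hence times the total mass; there are at most `|X|` such points, and the choice
`t = (2 / ε) log (|X| / β)` makes `|X| exp (-ε t / 2) = β`.
-/

open Finset Real

open scoped Classical in
theorem sum_exp_filter_lt_sub_le {X : Type*} [Fintype X] (q : X → ℝ) {ε : ℝ} (hε : 0 ≤ ε)
    (t : ℝ) (x₀ : X) :
    ∑ y ∈ univ.filter (fun y => q y < q x₀ - t), exp (ε * q y / 2) ≤
      Fintype.card X * exp (-ε * t / 2) * ∑ x, exp (ε * q x / 2) := by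
  set Z := ∑ x, exp (ε * q x / 2)
  have hZ : exp (ε * q x₀ / 2) ≤ Z :=
    single_le_sum (f := fun x => exp (ε * q x / 2)) (fun _ _ => (exp_pos _).le) (mem_univ x₀)
  have hterm : ∀ y ∈ univ.filter (fun y => q y < q x₀ - t),
      exp (ε * q y / 2) ≤ exp (-ε * t / 2) * Z := by
    intro y hy
    have hqy : q y ≤ q x₀ - t := (mem_filter.mp hy).2.le
    calc exp (ε * q y / 2) ≤ exp (-ε * t / 2 + ε * q x₀ / 2) := by
          gcongr
          nlinarith
      _ = exp (-ε * t / 2) * exp (ε * q x₀ / 2) := exp_add _ _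
      _ ≤ exp (-ε * t / 2) * Z := by gcongr
  calc ∑ y ∈ univ.filter (fun y => q y < q x₀ - t), exp (ε * q y / 2)
      ≤ #(univ.filter (fun y => q y < q x₀ - t)) • (exp (-ε * t / 2) * Z) :=
        sum_le_card_nsmul _ _ _ hterm
    _ ≤ Fintype.card X • (exp (-ε * t / 2) * Z) := by
        gcongr
        exact card_filter_le _ _
    _ = Fintype.card X * exp (-ε * t / 2) * Z := by rw [nsmul_eq_mul, mul_assoc]

open scoped Classical in
theorem stmt8_general {X : Type*} [Fintype X] [Nonempty X] (q : X → ℤ) (ε β : ℝ)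
    (hε : 0 < ε) (hβ0 : 0 < β) :
    (∑ y ∈ Finset.univ.filter (fun y : X =>
        (q y : ℝ) < ((Finset.univ.sup' Finset.univ_nonempty q : ℤ) : ℝ)
          - (2 / ε) * Real.log (Fintype.card X / β)),
        Real.exp (ε * q y / 2)) /
      (∑ x : X, Real.exp (ε * q x / 2)) ≤ β := by
  obtain ⟨x₀, -, hx₀⟩ := exists_mem_eq_sup' univ_nonempty q
  have hcard : (0 : ℝ) < Fintype.card X := by exact_mod_cast Fintype.card_pos
  have hZ : 0 < ∑ x : X, exp (ε * q x / 2) := sum_pos (fun _ _ => exp_pos _) univ_nonempty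
  have hscale :
      (Fintype.card X : ℝ) * exp (-ε * ((2 / ε) * log (Fintype.card X / β)) / 2) = β := by
    rw [show -ε * ((2 / ε) * log (Fintype.card X / β)) / 2 = -log (Fintype.card X / β) by
      field_simp, exp_neg, exp_log (div_pos hcard hβ0)]
    field_simp
  rw [div_le_iff₀ hZ, hx₀]
  exact (sum_exp_filter_lt_sub_le (fun x => (q x : ℝ)) hε.le _ x₀).trans_eq (by rw [hscale])

open scoped Classical in
theorem stmt8 {X : Type*} [Fintype X] [Nonempty X] (q : X → ℤ) (ε β : ℝ)
    (hε : 0 < ε) (hβ0 : 0 < β) (hβ1 : β < 1) :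
    (∑ y ∈ Finset.univ.filter (fun y : X =>
        (q y : ℝ) < ((Finset.univ.sup' Finset.univ_nonempty q : ℤ) : ℝ)
          - (2 / ε) * Real.log (Fintype.card X / β)),
        Real.exp (ε * q y / 2)) /
      (∑ x : X, Real.exp (ε * q x / 2)) ≤ β :=
  stmt8_general q ε β hε hβ0
end

section
/- Let X, X' be finite nonempty sets with X = X', and q, q' : X → ℤ quality functions satisfying |q(y) − q'(y)| ≤ 1 for all y. Let M, M' be the exponential-mechanism distributions with parameter ε corresponding to q and q' respectively. Then for every y ∈ X, M(y) ≤ exp(ε)·M'(y). -/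
open Finset

/-- One factor `c` comes from the numerator, the other from the normalizing sum. -/
theorem div_sum_le_sq_mul_div_sum {X : Type*} [Fintype X] {w w' : X → ℝ} {c : ℝ}
    (hw : ∀ x, 0 < w x) (hw' : ∀ x, 0 < w' x) (hle : ∀ x, w x ≤ c * w' x)
    (hge : ∀ x, w' x ≤ c * w x) (y : X) :
    w y / ∑ x, w x ≤ c ^ 2 * (w' y / ∑ x, w' x) := by
  have hne : (univ : Finset X).Nonempty := ⟨y, mem_univ y⟩
  have hS : 0 < ∑ x, w x := sum_pos (fun x _ => hw x) hne
  have hS' : 0 < ∑ x, w' x := sum_pos (fun x _ => hw' x) hne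
  have hsum : ∑ x, w' x ≤ c * ∑ x, w x := by
    rw [mul_sum]
    exact sum_le_sum fun x _ => hge x
  rw [div_le_iff₀ hS, ← mul_div_assoc, div_mul_eq_mul_div, le_div_iff₀ hS']
  calc w y * ∑ x, w' x ≤ (c * w' y) * (c * ∑ x, w x) :=
        mul_le_mul (hle y) hsum hS'.le ((hw y).le.trans (hle y))
    _ = c ^ 2 * w' y * ∑ x, w x := by ring

noncomputable def expMechanism {X : Type*} [Fintype X] (ε : ℝ) (u : X → ℝ) (y : X) : ℝ :=
  Real.exp (ε * u y / 2) / ∑ x, Real.exp (ε * u x / 2)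

theorem exp_mul_half_le_of_le_add {ε a b Δ : ℝ} (hε : 0 ≤ ε) (hab : a ≤ b + Δ) :
    Real.exp (ε * a / 2) ≤ Real.exp (ε * Δ / 2) * Real.exp (ε * b / 2) := by
  rw [← Real.exp_add, Real.exp_le_exp]
  nlinarith

theorem expMechanism_le_exp_mul {X : Type*} [Fintype X] {ε Δ : ℝ} {u u' : X → ℝ}
    (hε : 0 ≤ ε) (hsens : ∀ x, |u x - u' x| ≤ Δ) (y : X) :
    expMechanism ε u y ≤ Real.exp (ε * Δ) * expMechanism ε u' y := by
  have hsq : Real.exp (ε * Δ) = Real.exp (ε * Δ / 2) ^ 2 := by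
    rw [sq, ← Real.exp_add, add_halves]
  rw [hsq]
  refine div_sum_le_sq_mul_div_sum (fun _ => Real.exp_pos _) (fun _ => Real.exp_pos _)
    (fun x => exp_mul_half_le_of_le_add hε ?_) (fun x => exp_mul_half_le_of_le_add hε ?_) y
  · linarith [(abs_le.mp (hsens x)).2]
  · linarith [(abs_le.mp (hsens x)).1]

theorem stmt9_general {X : Type*} [Fintype X] (q q' : X → ℤ) (ε : ℝ)
    (hε : 0 < ε) (hsens : ∀ y : X, |q y - q' y| ≤ 1) :
    ∀ y : X,
      Real.exp (ε * q y / 2) / (∑ x : X, Real.exp (ε * q x / 2)) ≤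
        Real.exp ε *
          (Real.exp (ε * q' y / 2) / (∑ x : X, Real.exp (ε * q' x / 2))) := by
  intro y
  have hsens' : ∀ x, |(q x : ℝ) - q' x| ≤ 1 := fun x => by exact_mod_cast hsens x
  simpa only [expMechanism, mul_one] using
    expMechanism_le_exp_mul (u := fun x => (q x : ℝ)) (u' := fun x => (q' x : ℝ)) hε.le hsens' y

theorem stmt9 {X : Type*} [Fintype X] [Nonempty X] (q q' : X → ℤ) (ε : ℝ)
    (hε : 0 < ε) (hsens : ∀ y : X, |q y - q' y| ≤ 1) :
    ∀ y : X,
      Real.exp (ε * q y / 2) / (∑ x : X, Real.exp (ε * q x / 2)) ≤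
        Real.exp ε *
          (Real.exp (ε * q' y / 2) / (∑ x : X, Real.exp (ε * q' x / 2))) :=
  stmt9_general q q' ε hε hsens
end

section
/- Let w, w' : V → ℕ be two weight functions on the nodes of a binary tree such that |w(v) − w'(v)| ≤ 1 for all v, and each node's weight equals the sum of its children's weights under both w and w'. Fix t ≥ 3 and a threshold k with t ≥ 2k ≥ 4. Define the deterministic heavy path for a weight function: start at the root, stop when reaching a leaf or a node of weight ≤ t, otherwise proceed to the child of larger weight (ties broken by a fixed rule). Suppose that along the heavy path π for w, at every non-final node the lighter child has weight < k while the current node has weight > t. Then the heavy path π' for w' agrees with π at every branching decision; consequently either π = π' or one of π, π' is a prefix of the other. -/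
/-- One step of the deterministic heavy path in the complete binary tree of depth `L`
(nodes are Boolean address lists): stop (`none`) at a leaf or at a node of weight ≤ `t`,
otherwise proceed to the child with larger weight (on ties, to the `false` child). -/
def heavyStep (L t : ℕ) (w : List Bool → ℕ) (v : List Bool) : Option (List Bool) :=
  if v.length = L ∨ w v ≤ t then none
  else if w (v ++ [true]) ≤ w (v ++ [false]) then some (v ++ [false])
  else some (v ++ [true])

/-- The node of the heavy path reached after `k` steps (stabilizes once the path stops). -/
def heavyPath (L t : ℕ) (w : List Bool → ℕ) : ℕ → List Bool
  | 0 => []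
  | k + 1 =>
    match heavyStep L t w (heavyPath L t w k) with
    | none => heavyPath L t w k
    | some v => v

lemma heavyStep_some {L t : ℕ} {w : List Bool → ℕ} {v x : List Bool}
    (h : heavyStep L t w v = some x) :
    v.length ≠ L ∧ t < w v ∧
      ((w (v ++ [true]) ≤ w (v ++ [false]) ∧ x = v ++ [false]) ∨
       (w (v ++ [false]) < w (v ++ [true]) ∧ x = v ++ [true])) := by
  unfold heavyStep at h
  split_ifs at h with h1 h2
  · push_neg at h1
    exact ⟨h1.1, h1.2, Or.inl ⟨h2, (Option.some_inj.mp h).symm⟩⟩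
  · push_neg at h1 h2
    exact ⟨h1.1, h1.2, Or.inr ⟨h2, (Option.some_inj.mp h).symm⟩⟩

lemma heavyPath_length_le (L t : ℕ) (w : List Bool → ℕ) : ∀ i, (heavyPath L t w i).length ≤ L := by
  intro i
  induction i with
  | zero => simp [heavyPath]
  | succ i ih =>
    cases h : heavyStep L t w (heavyPath L t w i) with
    | none => simp only [heavyPath, h]; exact ih
    | some x =>
      simp only [heavyPath, h]
      obtain ⟨hne, -, hcase⟩ := heavyStep_some h
      rcases hcase with ⟨-, rfl⟩ | ⟨-, rfl⟩ <;> simp <;> omega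

theorem stmt12 (L t k : ℕ) (ht3 : 3 ≤ t) (htk : 2 * k ≤ t) (hk : 2 ≤ k)
    (w w' : List Bool → ℕ)
    (hcons : ∀ v : List Bool, v.length < L → w v = w (v ++ [false]) + w (v ++ [true]))
    (hcons' : ∀ v : List Bool, v.length < L → w' v = w' (v ++ [false]) + w' (v ++ [true]))
    (hclose : ∀ v : List Bool, |(w v : ℤ) - (w' v : ℤ)| ≤ 1)
    (hgap : ∀ i : ℕ, heavyStep L t w (heavyPath L t w i) ≠ none →
      min (w (heavyPath L t w i ++ [false])) (w (heavyPath L t w i ++ [true])) < k ∧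
      t < w (heavyPath L t w i)) :
    ∀ i : ℕ,
      heavyPath L t w i <+: heavyPath L t w' i ∨
      heavyPath L t w' i <+: heavyPath L t w i := by
  suffices H : ∀ i, heavyPath L t w' i = heavyPath L t w i ∨
      (heavyPath L t w i <+: heavyPath L t w' i ∧
        heavyStep L t w (heavyPath L t w i) = none) ∨
      (heavyPath L t w' i <+: heavyPath L t w i ∧
        heavyStep L t w' (heavyPath L t w' i) = none) by
    intro i
    rcases H i with h | ⟨h, -⟩ | ⟨h, -⟩
    · exact Or.inl (h ▸ List.prefix_rfl)
    · exact Or.inl h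
    · exact Or.inr h
  intro i
  induction i with
  | zero => left; rfl
  | succ i ih =>
    rcases ih with heq | ⟨hpre, hstop⟩ | ⟨hpre, hstop⟩
    · -- both at same node v
      set v := heavyPath L t w i with hv
      cases hs : heavyStep L t w v with
      | none =>
        have hP : heavyPath L t w (i + 1) = v := by simp only [heavyPath, ← hv, hs]
        cases hs' : heavyStep L t w' (heavyPath L t w' i) with
        | none =>
          left
          simp only [heavyPath, hs', ← hv, hs]
          exact heq
        | some y =>
          right; left
          have hP' : heavyPath L t w' (i + 1) = y := by simp only [heavyPath, hs']
          obtain ⟨-, -, hcase⟩ := heavyStep_some hs'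
          rw [hP, hP', heq] at *
          constructor
          · rcases hcase with ⟨-, rfl⟩ | ⟨-, rfl⟩ <;> exact ⟨_, rfl⟩
          · rw [hP]; exact hs
      | some x =>
        have hP : heavyPath L t w (i + 1) = x := by simp only [heavyPath, ← hv, hs]
        have hlen : v.length < L := by
          have h1 := heavyPath_length_le L t w i
          rw [← hv] at h1
          have := (heavyStep_some hs).1
          omega
        obtain ⟨hmin, htw⟩ := hgap i (by rw [← hv, hs]; simp)
        rw [← hv] at hmin htw
        have hsum := hcons v hlen
        have hcf := abs_le.mp (hclose (v ++ [false]))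
        have hct := abs_le.mp (hclose (v ++ [true]))
        have hcv := abs_le.mp (hclose v)
        by_cases hw't : w' v ≤ t
        · -- w' stops at v
          right; right
          have hs' : heavyStep L t w' v = none := by
            unfold heavyStep
            rw [if_pos (Or.inr hw't)]
          have hP' : heavyPath L t w' (i + 1) = v := by
            simp only [heavyPath, heq, ← hv, hs']
          rw [hP, hP']
          obtain ⟨-, -, hcase⟩ := heavyStep_some hs
          exact ⟨by rcases hcase with ⟨-, rfl⟩ | ⟨-, rfl⟩ <;> exact ⟨_, rfl⟩, hs'⟩
        · -- both step, same child
          push_neg at hw't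
          left
          obtain ⟨-, -, hcase⟩ := heavyStep_some hs
          have hord : (w (v ++ [true]) ≤ w (v ++ [false]) ↔
              w' (v ++ [true]) ≤ w' (v ++ [false])) := by
            rcases min_cases (w (v ++ [false])) (w (v ++ [true])) with ⟨hm, _⟩ | ⟨hm, _⟩ <;>
              rw [hm] at hmin <;> omega
          have hs' : heavyStep L t w' v = some x := by
            unfold heavyStep
            rw [if_neg (by push_neg; exact ⟨fun h => absurd h (heavyStep_some hs).1, hw't⟩)]
            rcases hcase with ⟨hle, rfl⟩ | ⟨hlt, rfl⟩
            · rw [if_pos (hord.mp hle)]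
            · rw [if_neg (by intro h; exact absurd (hord.mpr h) (by omega))]
          have hP' : heavyPath L t w' (i + 1) = x := by
            simp only [heavyPath, heq, ← hv, hs']
          rw [hP, hP']
    · -- w stopped, w path constant
      right; left
      have hP : heavyPath L t w (i + 1) = heavyPath L t w i := by
        simp only [heavyPath, hstop]
      rw [hP]
      refine ⟨?_, hstop⟩
      cases hs' : heavyStep L t w' (heavyPath L t w' i) with
      | none =>
        have : heavyPath L t w' (i + 1) = heavyPath L t w' i := by
          simp only [heavyPath, hs']
        rw [this]; exact hpre
      | some y =>
        have hP' : heavyPath L t w' (i + 1) = y := by simp only [heavyPath, hs']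
        rw [hP']
        obtain ⟨-, -, hcase⟩ := heavyStep_some hs'
        rcases hcase with ⟨-, rfl⟩ | ⟨-, rfl⟩ <;>
          exact hpre.trans ⟨_, rfl⟩
    · -- w' stopped
      right; right
      have hP' : heavyPath L t w' (i + 1) = heavyPath L t w' i := by
        simp only [heavyPath, hstop]
      rw [hP']
      refine ⟨?_, hstop⟩
      cases hs : heavyStep L t w (heavyPath L t w i) with
      | none =>
        have : heavyPath L t w (i + 1) = heavyPath L t w i := by
          simp only [heavyPath, hs]
        rw [this]; exact hpre
      | some y =>
        have hP : heavyPath L t w (i + 1) = y := by simp only [heavyPath, hs]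
        rw [hP]
        obtain ⟨-, -, hcase⟩ := heavyStep_some hs
        rcases hcase with ⟨-, rfl⟩ | ⟨-, rfl⟩ <;>
          exact hpre.trans ⟨_, rfl⟩
end

section
/- Let M be a randomized algorithm, S, S' neighboring databases, and D a random variable (depending on S) taking values in a countable set P, with D' the analogous variable for S'. Suppose P partitions into 'weak' elements π with Pr_S[D=π] ≤ δ and 'strong' elements, such that: (a) Σ_{weak π} Pr_S[D=π] ≤ nδ; (b) for every strong π there is a set Π'_π ⊆ P with the sets {Π'_π} pairwise disjoint, Pr_S[D=π] ≤ e^{ε₁}·Pr_{S'}[D'∈Π'_π], and Pr[M(S)∈T | D=π] ≤ e^{ε₂}·Pr[M(S')∈T | D'∈Π'_π] + δ₂ for every event T. Then for every event T: Pr[M(S)∈T] ≤ e^{ε₁+ε₂}·Pr[M(S')∈T] + nδ + e^{ε₁}·δ₂. -/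
/-!
Split `Pr[M(S) ∈ T] = ∑' π, Pr_S[D = π] · Pr[M(S) ∈ T ∣ D = π]` into weak and strong paths.
The weak paths contribute at most `n δ`. On a strong path `π`, multiplying the two bounds of (b) bounds its term by
`e^{ε₁+ε₂} ∑_{π' ∈ Π'_π} Pr_{S'}[D' = π'] Pr[M(S') ∈ T ∣ D' = π'] + e^{ε₁} δ₂ Pr_{S'}[D' ∈ Π'_π]`,
and since the sets `Π'_π` are pairwise disjoint, summing over strong `π` is bounded by summing
over all of `P`, which gives `e^{ε₁+ε₂} Pr[M(S') ∈ T] + e^{ε₁} δ₂`.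
-/

section PairwiseDisjoint

variable {ι α : Type*} {s : Set ι} {t : ι → Set α} {u : α → ℝ}

theorem Summable.sigma_of_pairwiseDisjoint (ht : s.PairwiseDisjoint t) (hu : Summable u) :
    Summable fun σ : Σ i : s, t i => u σ.2 :=
  ((Set.biUnionEqSigmaOfDisjoint ht).symm.summable_iff
    (f := fun x : ⋃ i ∈ s, t i => u x)).mpr (hu.subtype _)

theorem Summable.tsum_biUnion_of_pairwiseDisjoint (ht : s.PairwiseDisjoint t)
    (hu : Summable u) : ∑' x : ⋃ i ∈ s, t i, u x = ∑' i : s, ∑' x : t i, u x :=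
  ((Set.biUnionEqSigmaOfDisjoint ht).symm.tsum_eq (fun x : ⋃ i ∈ s, t i => u x)).symm.trans
    (hu.sigma_of_pairwiseDisjoint ht).tsum_sigma

theorem tsum_tsum_le_tsum_of_pairwiseDisjoint (ht : s.PairwiseDisjoint t) (hu0 : ∀ x, 0 ≤ u x)
    (hu : Summable u) : ∑' i : s, ∑' x : t i, u x ≤ ∑' x, u x :=
  (hu.tsum_biUnion_of_pairwiseDisjoint ht).symm.trans_le (hu.tsum_subtype_le u _ hu0)

theorem tsum_subtype_le_of_le_tsum_pairwiseDisjoint (ht : s.PairwiseDisjoint t) {f : ι → ℝ}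
    {p q : α → ℝ} (hf : Summable f) (hp0 : ∀ x, 0 ≤ p x) (hp : Summable p)
    (hq0 : ∀ x, 0 ≤ q x) (hq : Summable q) {a b : ℝ} (ha : 0 ≤ a) (hb : 0 ≤ b)
    (hle : ∀ i ∈ s, f i ≤ a * ∑' x : t i, q x + b * ∑' x : t i, p x) :
    ∑' i : s, f i ≤ a * ∑' x, q x + b * ∑' x, p x := by
  have hq' := ((hq.sigma_of_pairwiseDisjoint ht).sigma).mul_left a
  have hp' := ((hp.sigma_of_pairwiseDisjoint ht).sigma).mul_left b
  calc ∑' i : s, f i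
      ≤ ∑' i : s, (a * ∑' x : t i, q x + b * ∑' x : t i, p x) :=
        (hf.subtype s).tsum_le_tsum (fun i => hle i i.2) (hq'.add hp')
    _ = a * ∑' i : s, ∑' x : t i, q x + b * ∑' i : s, ∑' x : t i, p x := by
        rw [hq'.tsum_add hp', tsum_mul_left, tsum_mul_left]
    _ ≤ a * ∑' x, q x + b * ∑' x, p x := by
        gcongr
        · exact tsum_tsum_le_tsum_of_pairwiseDisjoint ht hq0 hq
        · exact tsum_tsum_le_tsum_of_pairwiseDisjoint ht hp0 hp

end PairwiseDisjoint

theorem mul_le_mul_mul_add_of_le_mul {p c S m a b d : ℝ} (hp : 0 ≤ p) (hc : 0 ≤ c)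
    (hpS : p ≤ a * S) (hcm : c ≤ b * m + d) : p * c ≤ a * b * (S * m) + a * d * S :=
  calc p * c ≤ a * S * c := mul_le_mul_of_nonneg_right hpS hc
    _ ≤ a * S * (b * m + d) := mul_le_mul_of_nonneg_left hcm (hp.trans hpS)
    _ = a * b * (S * m) + a * d * S := by ring

theorem stmt15_general {P Ω : Type*}
    (ε₁ ε₂ δ δ₂ n : ℝ) (hδ₂ : 0 ≤ δ₂)
    (pS pS' : P → ℝ) (cS cS' cM' : P → Set Ω → ℝ)
    (Pi' : P → Set P)
    (hpS0 : ∀ π, 0 ≤ pS π) (hpS'0 : ∀ π, 0 ≤ pS' π)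
    (hsum : Summable pS) (hsum' : Summable pS')
    (hpS'1 : ∑' π, pS' π ≤ 1)
    (hc0 : ∀ π T, 0 ≤ cS π T) (hc1 : ∀ π T, cS π T ≤ 1)
    (hc'0 : ∀ π T, 0 ≤ cS' π T) (hc'1 : ∀ π T, cS' π T ≤ 1)
    (hweak : ∑' π : {π : P // pS π ≤ δ}, pS (π : P) ≤ n * δ)
    (hdisj : ∀ π₁ π₂ : P, ¬ pS π₁ ≤ δ → ¬ pS π₂ ≤ δ → π₁ ≠ π₂ →
      Disjoint (Pi' π₁) (Pi' π₂))
    (hb1 : ∀ π : P, ¬ pS π ≤ δ →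
      pS π ≤ Real.exp ε₁ * ∑' π' : Pi' π, pS' (π' : P))
    (hb2 : ∀ π : P, ¬ pS π ≤ δ → ∀ T : Set Ω,
      cS π T ≤ Real.exp ε₂ * cM' π T + δ₂)
    (hcond : ∀ π : P, ¬ pS π ≤ δ → ∀ T : Set Ω,
      (∑' π' : Pi' π, pS' (π' : P)) * cM' π T
        = ∑' π' : Pi' π, pS' (π' : P) * cS' (π' : P) T) :
    ∀ T : Set Ω,
      (∑' π, pS π * cS π T) ≤
        Real.exp (ε₁ + ε₂) * (∑' π, pS' π * cS' π T) + n * δ + Real.exp ε₁ * δ₂ := by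
  intro T
  have hf : Summable fun π => pS π * cS π T := hsum.of_nonneg_of_le
    (fun π => mul_nonneg (hpS0 π) (hc0 π T)) fun π => mul_le_of_le_one_right (hpS0 π) (hc1 π T)
  have hg0 : ∀ π, 0 ≤ pS' π * cS' π T := fun π => mul_nonneg (hpS'0 π) (hc'0 π T)
  have hg : Summable fun π => pS' π * cS' π T :=
    hsum'.of_nonneg_of_le hg0 fun π => mul_le_of_le_one_right (hpS'0 π) (hc'1 π T)
  have weak : ∑' π : {π | pS π ≤ δ}, pS π * cS π T ≤ n * δ :=
    (Summable.tsum_le_tsum (fun π : {π | pS π ≤ δ} => mul_le_of_le_one_right (hpS0 π) (hc1 π T))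
      (hf.subtype _) (hsum.subtype _)).trans hweak
  have strong : ∑' π : ↥({π | pS π ≤ δ}ᶜ : Set P), pS π * cS π T ≤
      Real.exp (ε₁ + ε₂) * ∑' π, pS' π * cS' π T + Real.exp ε₁ * δ₂ * ∑' π, pS' π := by
    refine tsum_subtype_le_of_le_tsum_pairwiseDisjoint (fun a ha b hb => hdisj a b ha hb) hf hpS'0 hsum'
      hg0 hg (Real.exp_pos _).le (by positivity) fun π hπ => ?_
    rw [← hcond π hπ T, Real.exp_add]
    exact mul_le_mul_mul_add_of_le_mul (hpS0 π) (hc0 π T) (hb1 π hπ) (hb2 π hπ T)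
  have hδ₂pS' : Real.exp ε₁ * δ₂ * ∑' π, pS' π ≤ Real.exp ε₁ * δ₂ :=
    mul_le_of_le_one_right (by positivity) hpS'1
  rw [← hf.tsum_subtype_add_tsum_subtype_compl {π | pS π ≤ δ}]
  linarith

/-- Hybrid/conditioning lemma underlying the TreeLog privacy proof.
`pS π = Pr_S[D = π]`, `cS π T = Pr[M(S) ∈ T ∣ D = π]`, and similarly for `S'`;
`cM' π T = Pr[M(S') ∈ T ∣ D' ∈ Pi' π]`. A path `π` is weak if `pS π ≤ δ`. -/
theorem stmt15 {P Ω : Type*} [Countable P]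
    (ε₁ ε₂ δ δ₂ n : ℝ) (hδ : 0 ≤ δ) (hδ₂ : 0 ≤ δ₂) (hn : 0 ≤ n)
    (pS pS' : P → ℝ) (cS cS' cM' : P → Set Ω → ℝ)
    (Pi' : P → Set P)
    (hpS0 : ∀ π, 0 ≤ pS π) (hpS'0 : ∀ π, 0 ≤ pS' π)
    (hsum : Summable pS) (hsum' : Summable pS')
    (hpS'1 : ∑' π, pS' π ≤ 1)
    (hc0 : ∀ π T, 0 ≤ cS π T) (hc1 : ∀ π T, cS π T ≤ 1)
    (hc'0 : ∀ π T, 0 ≤ cS' π T) (hc'1 : ∀ π T, cS' π T ≤ 1)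
    (hweak : ∑' π : {π : P // pS π ≤ δ}, pS (π : P) ≤ n * δ)
    (hdisj : ∀ π₁ π₂ : P, ¬ pS π₁ ≤ δ → ¬ pS π₂ ≤ δ → π₁ ≠ π₂ →
      Disjoint (Pi' π₁) (Pi' π₂))
    (hb1 : ∀ π : P, ¬ pS π ≤ δ →
      pS π ≤ Real.exp ε₁ * ∑' π' : Pi' π, pS' (π' : P))
    (hb2 : ∀ π : P, ¬ pS π ≤ δ → ∀ T : Set Ω,
      cS π T ≤ Real.exp ε₂ * cM' π T + δ₂)
    (hcond : ∀ π : P, ¬ pS π ≤ δ → ∀ T : Set Ω,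
      (∑' π' : Pi' π, pS' (π' : P)) * cM' π T
        = ∑' π' : Pi' π, pS' (π' : P) * cS' (π' : P) T) :
    ∀ T : Set Ω,
      (∑' π, pS π * cS π T) ≤
        Real.exp (ε₁ + ε₂) * (∑' π, pS' π * cS' π T) + n * δ + Real.exp ε₁ * δ₂ :=
  stmt15_general ε₁ ε₂ δ δ₂ n hδ₂ pS pS' cS cS' cM' Pi' hpS0 hpS'0 hsum hsum' hpS'1 hc0 hc1 hc'0
    hc'1 hweak hdisj hb1 hb2 hcond
end

section
/- Let d* be a random variable (output of a preliminary (ε,δ)-DP algorithm on database S) taking values in {1,...,m}, and for each d let B_d be an algorithm with B_d(S) ≈_{(ε̂,δ̂)} B_d(S') for all d ≤ D*(S), where D*(S) is a deterministic function with Pr[d* > D*(S)] ≤ δ and Pr[d* = d] ≤ e^ε·Pr[d*' = d] + δ for all d, where d*' is the preliminary output on neighboring S'. Then the two-stage algorithm S ↦ B_{d*}(S) satisfies, for every event T, Pr[B_{d*}(S) ∈ T] ≤ 4·max(δ,δ̂)·e^{ε̂}·m + e^{ε̂+ε}·Pr[B_{d*'}(S') ∈ T]. -/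
/-- Abstract form of the HeavyPaths privacy argument: a private selection of an index
`d*` (with distribution `pd` on `{1,…,m}`, resp. `pd'` on the neighboring database),
which exceeds the data-dependent cutoff `Dstar` with probability ≤ δ, followed by an
algorithm `B_d` that is `(ε̂,δ̂)`-indistinguishable on `S, S'` whenever `d ≤ Dstar`. -/
theorem stmt19 {Ω : Type*} (m Dstar : ℕ) (ε εh δ δh : ℝ)
    (hε : 0 ≤ ε) (hεh : 0 ≤ εh) (hδ : 0 ≤ δ) (hδh : 0 ≤ δh)
    (pd pd' : ℕ → ℝ) (PrB PrB' : ℕ → Set Ω → ℝ)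
    (hpd0 : ∀ d, 0 ≤ pd d) (hpd'0 : ∀ d, 0 ≤ pd' d)
    (hpdsum : ∑ d ∈ Finset.Icc 1 m, pd d = 1)
    (hpd'sum : ∑ d ∈ Finset.Icc 1 m, pd' d = 1)
    (hB0 : ∀ d T, 0 ≤ PrB d T) (hB1 : ∀ d T, PrB d T ≤ 1)
    (hB'0 : ∀ d T, 0 ≤ PrB' d T) (hB'1 : ∀ d T, PrB' d T ≤ 1)
    (htail : ∑ d ∈ (Finset.Icc 1 m).filter (fun d => Dstar < d), pd d ≤ δ)
    (hsel : ∀ d, pd d ≤ Real.exp ε * pd' d + δ)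
    (hBdp : ∀ d ≤ Dstar, ∀ T : Set Ω,
      PrB d T ≤ Real.exp εh * PrB' d T + δh ∧
      PrB' d T ≤ Real.exp εh * PrB d T + δh) :
    ∀ T : Set Ω,
      ∑ d ∈ Finset.Icc 1 m, pd d * PrB d T ≤
        4 * max δ δh * Real.exp εh * m +
          Real.exp (εh + ε) * ∑ d ∈ Finset.Icc 1 m, pd' d * PrB' d T := by
  intro T
  have hm : 1 ≤ m := by
    by_contra h
    interval_cases m
    simp at hpdsum
  have hE : (1:ℝ) ≤ Real.exp εh := Real.one_le_exp hεh
  have hE0 : (0:ℝ) ≤ Real.exp εh := by positivity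
  have hEe0 : (0:ℝ) ≤ Real.exp (εh + ε) := by positivity
  set A := Finset.Icc 1 m with hA
  rw [← Finset.sum_filter_add_sum_filter_not A (fun d => Dstar < d)]
  have htail2 : ∑ d ∈ A.filter (fun d => Dstar < d), pd d * PrB d T ≤ δ := by
    refine le_trans (Finset.sum_le_sum (fun d _ => ?_)) htail
    calc pd d * PrB d T ≤ pd d * 1 := mul_le_mul_of_nonneg_left (hB1 d T) (hpd0 d)
      _ = pd d := mul_one _
  have hmain : ∑ d ∈ A.filter (fun d => ¬ Dstar < d), pd d * PrB d T ≤
      (Real.exp εh * δ + δh) * m +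
        Real.exp (εh + ε) * ∑ d ∈ A, pd' d * PrB' d T := by
    have step : ∀ d ∈ A.filter (fun d => ¬ Dstar < d),
        pd d * PrB d T ≤
          Real.exp (εh + ε) * (pd' d * PrB' d T) + (Real.exp εh * δ + δh) := by
      intro d hd
      simp only [Finset.mem_filter, not_lt] at hd
      obtain ⟨hdA, hdD⟩ := hd
      have h1 := (hBdp d hdD T).1
      have h2 := hsel d
      have hpd1 : pd d ≤ 1 := by
        calc pd d ≤ ∑ e ∈ A, pd e := Finset.single_le_sum (fun e _ => hpd0 e) hdA
          _ = 1 := hpdsum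
      rw [Real.exp_add]
      nlinarith [mul_le_mul_of_nonneg_left h1 (hpd0 d),
        mul_le_mul_of_nonneg_left (mul_le_mul_of_nonneg_right h2 (hB'0 d T)) hE0,
        mul_le_mul_of_nonneg_left (hB'1 d T) (mul_nonneg hE0 hδ),
        mul_le_mul_of_nonneg_right hpd1 hδh]
    calc ∑ d ∈ A.filter (fun d => ¬ Dstar < d), pd d * PrB d T
        ≤ ∑ d ∈ A.filter (fun d => ¬ Dstar < d),
            (Real.exp (εh + ε) * (pd' d * PrB' d T) + (Real.exp εh * δ + δh)) :=
          Finset.sum_le_sum step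
      _ = Real.exp (εh + ε) * ∑ d ∈ A.filter (fun d => ¬ Dstar < d), pd' d * PrB' d T
            + (A.filter (fun d => ¬ Dstar < d)).card * (Real.exp εh * δ + δh) := by
          rw [Finset.sum_add_distrib, Finset.mul_sum, Finset.sum_const, nsmul_eq_mul]
      _ ≤ Real.exp (εh + ε) * ∑ d ∈ A, pd' d * PrB' d T
            + m * (Real.exp εh * δ + δh) := by
          have h1 : ∑ d ∈ A.filter (fun d => ¬ Dstar < d), pd' d * PrB' d T ≤
              ∑ d ∈ A, pd' d * PrB' d T :=
            Finset.sum_le_sum_of_subset_of_nonneg (Finset.filter_subset _ _)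
              (fun d _ _ => mul_nonneg (hpd'0 d) (hB'0 d T))
          have h2 : ((A.filter (fun d => ¬ Dstar < d)).card : ℝ) ≤ m := by
            have hc := Finset.card_le_card
              (Finset.filter_subset (fun d => ¬ Dstar < d) A)
            have hc2 : (A.filter (fun d => ¬ Dstar < d)).card ≤ m := by
              simpa [hA, Nat.card_Icc] using hc
            exact_mod_cast hc2
          have h3 : (0:ℝ) ≤ Real.exp εh * δ + δh := by positivity
          exact add_le_add (mul_le_mul_of_nonneg_left h1 hEe0)
            (mul_le_mul_of_nonneg_right h2 h3)
      _ = (Real.exp εh * δ + δh) * m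
            + Real.exp (εh + ε) * ∑ d ∈ A, pd' d * PrB' d T := by ring
  have hM1 : δ ≤ max δ δh := le_max_left _ _
  have hM2 : δh ≤ max δ δh := le_max_right _ _
  have hM0 : (0:ℝ) ≤ max δ δh := le_trans hδ hM1
  have hm1 : (1:ℝ) ≤ m := by exact_mod_cast hm
  have hEm : (1:ℝ) * 1 ≤ Real.exp εh * m := mul_le_mul hE hm1 zero_le_one hE0
  have harith : δ + (Real.exp εh * δ + δh) * m ≤ 4 * max δ δh * Real.exp εh * m := by
    have hMEm : max δ δh * 1 ≤ max δ δh * (Real.exp εh * m) :=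
      mul_le_mul_of_nonneg_left (by linarith) hM0
    nlinarith [mul_le_mul_of_nonneg_right (mul_le_mul_of_nonneg_left hM1 hE0)
        (le_trans zero_le_one hm1),
      mul_le_mul_of_nonneg_right (mul_le_mul_of_nonneg_left hM2 hE0)
        (le_trans zero_le_one hm1),
      mul_le_mul_of_nonneg_right hM2 (le_trans zero_le_one hm1),
      mul_nonneg (mul_nonneg hM0 hE0) (le_trans zero_le_one hm1)]
  linarith [htail2, hmain]
end
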